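/- For every integer N ≥ 1 there exist an integer n ≥ 1, a 1×n matrix Λ with all entries strictly positive integers, a vector k ∈ ℤⁿ with all entries strictly positive, and h ∈ ℤ¹ with strictly positive entry, such that Λ k = h and Λᵗ h = N · k. (This is the realizability part of the paper's Proposition: every positive integer—not only squares of integers—is the minimal index of a connected super-extremal multi-matrix inclusion. One may take Λ = k = (a_1,…,a_n) with a_1² + ⋯ + a_n² = N, using the four-square theorem and discarding zero entries; having a single row and all entries positive makes the inclusion connected.) -/

import Mathlib

/-!
Any vector `a` with positive integer entries gives a one-row inclusion matrix `Λ = a` with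
`k = a` and `h = (‖a‖²)`: then `Λ k = h` and `Λᵗ h = ‖a‖² • k`. For the index `N` take `a` to
be the all-ones vector of length `N`.
-/

open Matrix

theorem Matrix.transpose_replicateRow_mulVec {ι n R : Type*} [Unique ι] [CommSemiring R]
    (a : n → R) (w : ι → R) : (replicateRow ι a)ᵀ *ᵥ w = w default • a := by
  ext j
  simp [mulVec, dotProduct, replicateRow_apply, mul_comm]

theorem exists_row_inclusion_of_pos {n : ℕ} (a : Fin n → ℤ) (ha : ∀ j, 0 < a j) (hn : 1 ≤ n) :
    ∃ (Λ : Matrix (Fin 1) (Fin n) ℤ) (k : Fin n → ℤ) (h : Fin 1 → ℤ),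
      (∀ i j, 0 < Λ i j) ∧ (∀ j, 0 < k j) ∧ (∀ i, 0 < h i) ∧
      Λ *ᵥ k = h ∧ Λᵀ *ᵥ h = (a ⬝ᵥ a) • k := by
  have ha_sq : 0 < a ⬝ᵥ a :=
    Finset.sum_pos (fun j _ => mul_pos (ha j) (ha j)) (Finset.univ_nonempty_iff.2 ⟨⟨0, hn⟩⟩)
  exact ⟨replicateRow (Fin 1) a, a, fun _ => a ⬝ᵥ a, fun _ j => ha j, ha, fun _ => ha_sq,
    replicateRow_mulVec_eq_const a a, transpose_replicateRow_mulVec a _⟩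

theorem stmt7 (N : ℤ) (hN : 1 ≤ N) :
    ∃ (n : ℕ), 1 ≤ n ∧
      ∃ (Λ : Matrix (Fin 1) (Fin n) ℤ) (k : Fin n → ℤ) (h : Fin 1 → ℤ),
        (∀ i j, 0 < Λ i j) ∧ (∀ j, 0 < k j) ∧ (∀ i, 0 < h i) ∧
        Λ.mulVec k = h ∧ Λ.transpose.mulVec h = N • k := by
  lift N to ℕ using by omega
  have hn : 1 ≤ N := mod_cast hN
  have h_ones : (1 : Fin N → ℤ) ⬝ᵥ 1 = N := by simp
  refine ⟨N, hn, ?_⟩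
  simpa only [h_ones] using exists_row_inclusion_of_pos 1 (fun _ => one_pos) hn
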